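/- arXiv:2512.21977 — 2 statements merged into one kernel-verified Lean document; each statement's English description precedes it below -/
import Mathlib

section
/- There exists a constant c > 0 such that for every n and every integer j with 1 ≤ j ≤ n^{1/5}, the critical Erdős–Rényi random graph G(n,1/n) satisfies P( |C(1)| = j ) ≥ c j^{−3/2}. -/
open MeasureTheory Filter
open scoped ENNReal

/-- The Erdős–Rényi `G(n, 1/n)` measure on edge configurations of `K_n`:
each potential edge is retained (`true`) independently with probability `1/n`. -/
noncomputable def erMeasure (n : ℕ) : Measure (Sym2 (Fin n) → Bool) :=
  Measure.pi fun _ => (PMF.bernoulli (min (n : ℝ≥0∞)⁻¹ 1).toNNReal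
    ((ENNReal.toNNReal_mono ENNReal.one_ne_top (min_le_right _ _)).trans_eq ENNReal.toNNReal_one)).toMeasure

instance (n : ℕ) : IsProbabilityMeasure (erMeasure n) := by
  unfold erMeasure; infer_instance

/-- The simple graph on `Fin n` determined by an edge configuration. -/
def graphOf {n : ℕ} (ω : Sym2 (Fin n) → Bool) : SimpleGraph (Fin n) where
  Adj u v := u ≠ v ∧ ω s(u, v) = true
  symm := by
    constructor
    intro u v h
    exact ⟨Ne.symm h.1, by rw [Sym2.eq_swap]; exact h.2⟩
  loopless := by
    constructor
    intro u h
    exact h.1 rfl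

/-- Size of the connected component of `v`. -/
noncomputable def compSize {n : ℕ} (G : SimpleGraph (Fin n)) (v : Fin n) : ℕ :=
  Nat.card {w : Fin n | G.Reachable v w}

/-- Diameter of a finite graph: maximal distance between two vertices. -/
noncomputable def gdiam {n : ℕ} (G : SimpleGraph (Fin n)) : ℕ :=
  Finset.univ.sup fun p : Fin n × Fin n => G.dist p.1 p.2

open scoped Classical in
/-- Diameter of the connected component of `x`. -/
noncomputable def compDiam {n : ℕ} (G : SimpleGraph (Fin n)) (x : Fin n) : ℕ :=
  Finset.univ.sup fun p : Fin n × Fin n =>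
    if G.Reachable x p.1 ∧ G.Reachable x p.2 then G.dist p.1 p.2 else 0

/-- Product of the weights of the edges of `T`. -/
noncomputable def treeWeight {n : ℕ} (w : Sym2 (Fin n) → ℝ) (T : SimpleGraph (Fin n)) : ℝ :=
  letI : Fintype T.edgeSet := Fintype.ofFinite _
  ∏ e ∈ T.edgeSet.toFinset, w e

open scoped Classical in
/-- Probability that the `w`-weighted uniform spanning tree of `K_n` lies in `E`. -/
noncomputable def ustProb {n : ℕ} (w : Sym2 (Fin n) → ℝ) (E : Set (SimpleGraph (Fin n))) : ℝ :=
  (∑ T ∈ Finset.univ.filter (fun T : SimpleGraph (Fin n) => T.IsTree ∧ T ∈ E), treeWeight w T) /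
    (∑ T ∈ Finset.univ.filter (fun T : SimpleGraph (Fin n) => T.IsTree), treeWeight w T)

/-- The random weights: heavy edges get weight `n^(1+γ)`, the others weight `1`. -/
noncomputable def weightFn (n : ℕ) (γ : ℝ) (ω : Sym2 (Fin n) → Bool) (e : Sym2 (Fin n)) : ℝ :=
  if ω e then (n : ℝ) ^ ((1 : ℝ) + γ) else 1

/-!
Fix a `j`-set `S` containing the vertex and a spanning tree `T` of the complete graph on `S`.
The event that the edges of `T` are present and all other edges meeting `S` are absent forces
the component of the vertex to be `S`; it has probability at least
`n^{-(j-1)} (1 - 1/n)^{j(n-1)} ≥ n^{-(j-1)} e^{-j}`, and different pairs `(S, T)` give disjoint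
events. There are `C(n-1, j-1)` sets `S` and, by Cayley's formula (the Prüfer decoding gives the
lower bound), `j^{j-2}` trees on each. As `2 (j-1)^2 ≤ n`, `C(n-1, j-1) n^{-(j-1)} ≥ 1/(2 (j-1)!)`,
and the Stirling bound `(j-1)! e^{j-1} ≤ j^{j-1} √j` turns the total into `j^{-3/2} / (2e)`.
-/

open Real Finset
open scoped Nat NNReal

structure IsSpanningTreeOn {α : Type*} (E : Finset (Sym2 α)) (S : Finset α) : Prop where
  subset_sym2 : E ⊆ S.sym2
  not_isDiag : ∀ e ∈ E, ¬ e.IsDiag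
  card_add_one : #E + 1 = #S
  reachable : ∀ x ∈ S, ∀ y ∈ S, (SimpleGraph.fromEdgeSet (E : Set (Sym2 α))).Reachable x y

open Classical in
noncomputable def spanningTrees {α : Type*} (S : Finset α) : Finset (Finset (Sym2 α)) :=
  {E ∈ S.sym2.powerset | IsSpanningTreeOn E S}

lemma mem_spanningTrees {α : Type*} {S : Finset α} {E : Finset (Sym2 α)} :
    E ∈ spanningTrees S ↔ IsSpanningTreeOn E S := by
  classical
  simpa [spanningTrees] using fun h : IsSpanningTreeOn E S => h.subset_sym2

section Prufer

variable {α : Type*} [LinearOrder α]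

def pruferDecode : List α → Finset α → Finset (Sym2 α)
  | [], S => if h : 1 < #S then {s(S.min' (card_pos.1 (by omega)), S.max' (card_pos.1 (by omega)))}
      else ∅
  | b :: t, S =>
    if h : (S \ (b :: t).toFinset).Nonempty then
      insert s((S \ (b :: t).toFinset).min' h, b)
        (pruferDecode t (S.erase ((S \ (b :: t).toFinset).min' h)))
    else ∅

variable {S : Finset α} {a : List α}

lemma pruferDecode_nil_of_card_eq_two (h : #S = 2) :
    ∃ x y, x ≠ y ∧ S = {x, y} ∧ pruferDecode [] S = {s(x, y)} := by
  have h1 : 1 < #S := by omega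
  have hlt := S.min'_lt_max'_of_card h1
  refine ⟨_, _, hlt.ne, ?_, by rw [pruferDecode, dif_pos h1]⟩
  refine (eq_of_subset_of_card_le (insert_subset (min'_mem _ _) ?_) ?_).symm
  · exact singleton_subset_iff.2 (max'_mem _ _)
  · rw [card_pair hlt.ne, h]

lemma pruferDecode_cons {b : α} {t : List α} (hsub : ∀ z ∈ b :: t, z ∈ S)
    (hcard : #S = (b :: t).length + 2) :
    ∃ v ∈ S, v ∉ b :: t ∧ (∀ w ∈ S, w ∉ b :: t → v ≤ w) ∧ (∀ z ∈ t, z ∈ S.erase v) ∧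
      #(S.erase v) = t.length + 2 ∧
      pruferDecode (b :: t) S = insert s(v, b) (pruferDecode t (S.erase v)) := by
  have hne : (S \ (b :: t).toFinset).Nonempty := by
    have := le_card_sdiff (b :: t).toFinset S
    have := (b :: t).toFinset_card_le
    rw [← card_pos]
    omega
  have hv := mem_sdiff.1 ((S \ (b :: t).toFinset).min'_mem hne)
  rw [List.mem_toFinset] at hv
  refine ⟨_, hv.1, hv.2, fun w hw hwt => min'_le _ _ (mem_sdiff.2 ⟨hw, by rwa [List.mem_toFinset]⟩),
    fun z hz => ?_, by rw [card_erase_of_mem hv.1, hcard]; simp, by rw [pruferDecode, dif_pos hne]⟩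
  have hz' := List.mem_cons_of_mem b hz
  exact mem_erase.2 ⟨fun h => hv.2 (h ▸ hz'), hsub z hz'⟩

lemma pruferDecode_subset_sym2 (hsub : ∀ z ∈ a, z ∈ S) (hcard : #S = a.length + 2) :
    pruferDecode a S ⊆ S.sym2 := by
  induction a generalizing S with
  | nil =>
    obtain ⟨x, y, -, rfl, hE⟩ := pruferDecode_nil_of_card_eq_two hcard
    simp [hE]
  | cons b t ih =>
    obtain ⟨v, hvS, -, -, hsub', hcard', hE⟩ := pruferDecode_cons hsub hcard
    rw [hE, insert_subset_iff, mk_mem_sym2_iff]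
    exact ⟨⟨hvS, hsub b List.mem_cons_self⟩,
      (ih hsub' hcard').trans (sym2_mono (erase_subset v S))⟩

lemma not_mem_of_mem_pruferDecode {v : α} (hsub : ∀ z ∈ a, z ∈ S) (hcard : #S = a.length + 2)
    (hv : v ∉ S) {e : Sym2 α} (he : e ∈ pruferDecode a S) : v ∉ e :=
  fun hve => hv (mem_sym2_iff.1 (pruferDecode_subset_sym2 hsub hcard he) v hve)

lemma not_isDiag_of_mem_pruferDecode (hsub : ∀ z ∈ a, z ∈ S) (hcard : #S = a.length + 2)
    {e : Sym2 α} (he : e ∈ pruferDecode a S) : ¬ e.IsDiag := by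
  induction a generalizing S with
  | nil =>
    obtain ⟨x, y, hxy, -, hE⟩ := pruferDecode_nil_of_card_eq_two hcard
    rw [hE, mem_singleton] at he
    simpa [he]
  | cons b t ih =>
    obtain ⟨v, -, hvt, -, hsub', hcard', hE⟩ := pruferDecode_cons hsub hcard
    rw [hE, mem_insert] at he
    rcases he with rfl | he
    · exact fun h => hvt (Sym2.mk_isDiag_iff.1 h ▸ List.mem_cons_self)
    · exact ih hsub' hcard' he

lemma card_pruferDecode (hsub : ∀ z ∈ a, z ∈ S) (hcard : #S = a.length + 2) :
    #(pruferDecode a S) = a.length + 1 := by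
  induction a generalizing S with
  | nil =>
    obtain ⟨x, y, -, -, hE⟩ := pruferDecode_nil_of_card_eq_two hcard
    simp [hE]
  | cons b t ih =>
    obtain ⟨v, -, -, -, hsub', hcard', hE⟩ := pruferDecode_cons hsub hcard
    have hnot : s(v, b) ∉ pruferDecode t (S.erase v) := fun h =>
      not_mem_of_mem_pruferDecode hsub' hcard' (notMem_erase v S) h (Sym2.mem_mk_left v b)
    rw [hE, card_insert_of_notMem hnot, ih hsub' hcard', List.length_cons]

lemma reachable_pruferDecode (hsub : ∀ z ∈ a, z ∈ S) (hcard : #S = a.length + 2)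
    {x y : α} (hx : x ∈ S) (hy : y ∈ S) :
    (SimpleGraph.fromEdgeSet (pruferDecode a S : Set (Sym2 α))).Reachable x y := by
  induction a generalizing S x y with
  | nil =>
    obtain ⟨u, w, huw, rfl, hE⟩ := pruferDecode_nil_of_card_eq_two hcard
    have hadj : (SimpleGraph.fromEdgeSet (pruferDecode [] {u, w} : Set (Sym2 α))).Adj u w := by
      simp [hE, huw]
    simp only [mem_insert, mem_singleton] at hx hy
    rcases hx with rfl | rfl <;> rcases hy with rfl | rfl
    exacts [.rfl, hadj.reachable, hadj.symm.reachable, .rfl]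
  | cons b t ih =>
    obtain ⟨v, hvS, hvt, -, hsub', hcard', hE⟩ := pruferDecode_cons hsub hcard
    have hb : b ∈ S.erase v :=
      mem_erase.2 ⟨fun h => hvt (h ▸ List.mem_cons_self), hsub b List.mem_cons_self⟩
    have hle : SimpleGraph.fromEdgeSet (pruferDecode t (S.erase v) : Set (Sym2 α)) ≤
        SimpleGraph.fromEdgeSet (pruferDecode (b :: t) S : Set (Sym2 α)) := by
      rw [hE]; exact SimpleGraph.fromEdgeSet_mono (by simp)
    have hvb : (SimpleGraph.fromEdgeSet (pruferDecode (b :: t) S : Set (Sym2 α))).Adj v b := by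
      simp [hE, (mem_erase.1 hb).1.symm]
    have hfrom_v : ∀ z ∈ S,
        (SimpleGraph.fromEdgeSet (pruferDecode (b :: t) S : Set (Sym2 α))).Reachable v z := by
      intro z hz
      rcases eq_or_ne z v with rfl | hzv
      · rfl
      · exact hvb.reachable.trans ((ih hsub' hcard' hb (mem_erase.2 ⟨hzv, hz⟩)).mono hle)
    exact (hfrom_v x hx).symm.trans (hfrom_v y hy)

lemma card_filter_mem_pruferDecode (hsub : ∀ z ∈ a, z ∈ S) (hcard : #S = a.length + 2)
    {w : α} (hw : w ∈ S) : #{e ∈ pruferDecode a S | w ∈ e} = a.count w + 1 := by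
  induction a generalizing S with
  | nil =>
    obtain ⟨x, y, -, rfl, hE⟩ := pruferDecode_nil_of_card_eq_two hcard
    simp only [mem_insert, mem_singleton] at hw
    rcases hw with rfl | rfl <;> simp [hE, filter_singleton]
  | cons b t ih =>
    obtain ⟨v, -, hvt, -, hsub', hcard', hE⟩ := pruferDecode_cons hsub hcard
    rw [hE, filter_insert]
    rcases eq_or_ne w v with rfl | hwv
    · have hD : {e ∈ pruferDecode t (S.erase w) | w ∈ e} = ∅ := filter_eq_empty_iff.2
        fun e he => not_mem_of_mem_pruferDecode hsub' hcard' (notMem_erase w S) he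
      simp [hD, List.count_eq_zero.2 hvt]
    · have hnot : s(v, b) ∉ pruferDecode t (S.erase v) := fun h =>
        not_mem_of_mem_pruferDecode hsub' hcard' (notMem_erase v S) h (Sym2.mem_mk_left v b)
      have ih' := ih hsub' hcard' (mem_erase.2 ⟨hwv, hw⟩)
      rcases eq_or_ne w b with rfl | hwb
      · simp [hnot, ih']
      · simp [hwv, hwb, ih', Ne.symm hwb]

lemma pruferDecode_inj {a' : List α} (hsub : ∀ z ∈ a, z ∈ S) (hcard : #S = a.length + 2)
    (hsub' : ∀ z ∈ a', z ∈ S) (hcard' : #S = a'.length + 2)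
    (h : pruferDecode a S = pruferDecode a' S) : a = a' := by
  induction a generalizing a' S with
  | nil =>
    cases a' with
    | nil => rfl
    | cons => simp at hcard hcard'; omega
  | cons b t ih =>
    cases a' with
    | nil => simp at hcard hcard'; omega
    | cons b' t' =>
      obtain ⟨v, hvS, hvt, hvmin, hsubt, hcardt, hE⟩ := pruferDecode_cons hsub hcard
      obtain ⟨v', hv'S, hv't, hv'min, hsubt', hcardt', hE'⟩ := pruferDecode_cons hsub' hcard'
      have hmem : ∀ w ∈ S, w ∈ b :: t ↔ w ∈ b' :: t' := by
        intro w hw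
        have := card_filter_mem_pruferDecode hsub hcard hw
        rw [h, card_filter_mem_pruferDecode hsub' hcard' hw] at this
        rw [← List.count_pos_iff, ← List.count_pos_iff]
        omega
      obtain rfl : v = v' := le_antisymm (hvmin v' hv'S (mt (hmem v' hv'S).1 hv't))
        (hv'min v hvS (mt (hmem v hvS).2 hvt))
      rw [hE, hE'] at h
      have hnot : ∀ c, s(v, c) ∉ pruferDecode t (S.erase v) := fun c hc =>
        not_mem_of_mem_pruferDecode hsubt hcardt (notMem_erase v S) hc (Sym2.mem_mk_left v c)
      have hnot' : ∀ c, s(v, c) ∉ pruferDecode t' (S.erase v) := fun c hc =>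
        not_mem_of_mem_pruferDecode hsubt' hcardt' (notMem_erase v S) hc (Sym2.mem_mk_left v c)
      obtain rfl : b = b' := by
        rcases mem_insert.1 (h ▸ mem_insert_self s(v, b) _) with h' | h'
        · exact Sym2.congr_right.1 h'
        · exact absurd h' (hnot' b)
      have htail : pruferDecode t (S.erase v) = pruferDecode t' (S.erase v) := by
        rw [← erase_insert (hnot b), h, erase_insert (hnot' b)]
      rw [ih hsubt hcardt hsubt' hcardt' htail]

lemma isSpanningTreeOn_pruferDecode (hsub : ∀ z ∈ a, z ∈ S) (hcard : #S = a.length + 2) :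
    IsSpanningTreeOn (pruferDecode a S) S where
  subset_sym2 := pruferDecode_subset_sym2 hsub hcard
  not_isDiag _ := not_isDiag_of_mem_pruferDecode hsub hcard
  card_add_one := by rw [card_pruferDecode hsub hcard, hcard]
  reachable _ hx _ hy := reachable_pruferDecode hsub hcard hx hy

theorem card_pow_le_card_spanningTrees (hS : S.Nonempty) :
    #S ^ (#S - 2) ≤ #(spanningTrees S) := by
  obtain ⟨k, hk⟩ : ∃ k, #S = k + 1 := ⟨#S - 1, by have := hS.card_pos; omega⟩
  rcases k with _ | k
  · obtain ⟨x, rfl⟩ := card_eq_one.1 hk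
    have hsingleton : IsSpanningTreeOn (∅ : Finset (Sym2 α)) {x} :=
      ⟨empty_subset _, by simp, by simp, by simp⟩
    simpa using card_pos.2 ⟨_, mem_spanningTrees.2 hsingleton⟩
  · have hsub : ∀ c ∈ Fintype.piFinset fun _ : Fin k => S, ∀ z ∈ List.ofFn c, z ∈ S := by
      intro c hc z hz
      obtain ⟨i, rfl⟩ := List.mem_ofFn.1 hz
      exact Fintype.mem_piFinset.1 hc i
    have hlen : ∀ c : Fin k → α, #S = (List.ofFn c).length + 2 := by simp [hk]
    calc #S ^ (#S - 2) = #(Fintype.piFinset fun _ : Fin k => S) := by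
          simp [Fintype.card_piFinset, hk]
      _ ≤ #(spanningTrees S) := by
          refine card_le_card_of_injOn (fun c => pruferDecode (List.ofFn c) S)
            (fun c hc => mem_spanningTrees.2 (isSpanningTreeOn_pruferDecode (hsub c hc) (hlen c)))
            (fun c hc c' hc' h => List.ofFn_injective ?_)
          exact pruferDecode_inj (hsub c hc) (hlen c) (hsub c' hc') (hlen c') h

end Prufer

def openClosed {ι : Type*} (A B : Finset ι) : Set (ι → Bool) :=
  {ω | (∀ i ∈ A, ω i = true) ∧ ∀ i ∈ B, ω i = false}

lemma openClosed_eq_pi {ι : Type*} (A B : Finset ι) :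
    openClosed A B =
      Set.univ.pi fun i => {b | (i ∈ A → b = true) ∧ (i ∈ B → b = false)} := by
  ext ω
  simp only [openClosed, Set.mem_pi, Set.mem_univ, true_implies, Set.mem_ofPred_eq]
  exact ⟨fun h i => ⟨h.1 i, h.2 i⟩, fun h => ⟨fun i => (h i).1, fun i => (h i).2⟩⟩

lemma measureReal_pi_bernoulli_openClosed {ι : Type*} [Fintype ι] (p : ℝ≥0) (hp : p ≤ 1)
    {A B : Finset ι} (hAB : Disjoint A B) :
    (Measure.pi fun _ : ι => (PMF.bernoulli p hp).toMeasure).real (openClosed A B) =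
      (p : ℝ) ^ #A * (1 - p : ℝ) ^ #B := by
  classical
  have hfactor : ∀ i, (PMF.bernoulli p hp).toMeasure
      {b | (i ∈ A → b = true) ∧ (i ∈ B → b = false)} =
        (if i ∈ A then (p : ℝ≥0∞) else 1) *
          (if i ∈ B then ((1 - p : ℝ≥0) : ℝ≥0∞) else 1) := by
    intro i
    by_cases hA : i ∈ A
    · have hB : i ∉ B := disjoint_left.1 hAB hA
      simp [hA, hB, PMF.bernoulli_apply]
    · by_cases hB : i ∈ B
      · simp [hA, hB, PMF.bernoulli_apply]
      · simp only [hA, hB, false_implies, and_self, Set.ofPred_true, measure_univ, if_false,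
          mul_one]
  rw [measureReal_def, openClosed_eq_pi, Measure.pi_pi]
  simp only [hfactor, prod_mul_distrib, prod_ite_mem, univ_inter, prod_const]
  simp [ENNReal.toReal_sub_of_le (ENNReal.coe_le_one_iff.2 hp) ENNReal.one_ne_top]

lemma erMeasure_real_openClosed {n : ℕ} (hn : 0 < n) {A B : Finset (Sym2 (Fin n))}
    (hAB : Disjoint A B) :
    (erMeasure n).real (openClosed A B) = (n : ℝ)⁻¹ ^ #A * (1 - (n : ℝ)⁻¹) ^ #B := by
  have hp : ((min (n : ℝ≥0∞)⁻¹ 1).toNNReal : ℝ) = (n : ℝ)⁻¹ := by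
    rw [min_eq_left (ENNReal.inv_le_one.2 (by exact_mod_cast hn))]
    simp
  rw [erMeasure, measureReal_pi_bernoulli_openClosed _ _ hAB, hp]

def incidentEdges {V : Type*} [Fintype V] [DecidableEq V] (S : Finset V) : Finset (Sym2 V) :=
  S.biUnion fun v => (⊤ : SimpleGraph V).incidenceFinset v

section incidentEdges

variable {V : Type*} [Fintype V] [DecidableEq V] {S : Finset V}

lemma mk_mem_incidentEdges {u w : V} (hu : u ∈ S) (huw : u ≠ w) : s(u, w) ∈ incidentEdges S :=
  mem_biUnion.2 ⟨u, hu, by simpa [SimpleGraph.mem_incidenceFinset] using huw⟩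

lemma card_incidentEdges_le : #(incidentEdges S) ≤ #S * (Fintype.card V - 1) :=
  card_biUnion_le.trans_eq (by simp [SimpleGraph.card_incidenceFinset_eq_degree])

lemma IsSpanningTreeOn.subset_incidentEdges {E : Finset (Sym2 V)} (hE : IsSpanningTreeOn E S) :
    E ⊆ incidentEdges S := by
  intro e he
  induction e using Sym2.ind with
  | h u w =>
    exact mk_mem_incidentEdges (mk_mem_sym2_iff.1 (hE.subset_sym2 he)).1
      (fun h => hE.not_isDiag _ he (Sym2.mk_isDiag_iff.2 h))

end incidentEdges

lemma disjoint_openClosed {ι : Type*} {A B A' B' : Finset ι} {i : ι} (hA : i ∈ A)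
    (hB' : i ∈ B') :
    Disjoint (openClosed A B) (openClosed A' B') :=
  Set.disjoint_left.2 fun ω h h' => by simpa [h.1 i hA] using h'.2 i hB'

section Components

variable {n : ℕ} {S S' : Finset (Fin n)} {E E' : Finset (Sym2 (Fin n))}
  {ω : Sym2 (Fin n) → Bool} {z : Fin n}

lemma reachable_iff_mem_of_mem_openClosed (hE : IsSpanningTreeOn E S)
    (hω : ω ∈ openClosed E (incidentEdges S \ E)) (hz : z ∈ S) {w : Fin n} :
    (graphOf ω).Reachable z w ↔ w ∈ S := by
  constructor
  · have hclosed : ∀ u v, u ∈ S → (graphOf ω).Adj u v → v ∈ S := by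
      intro u v hu ⟨huv, hopen⟩
      by_contra hv
      have hE : s(u, v) ∉ E := fun he => hv (mk_mem_sym2_iff.1 (hE.subset_sym2 he)).2
      simpa [hopen] using hω.2 _ (mem_sdiff.2 ⟨mk_mem_incidentEdges hu huv, hE⟩)
    rw [SimpleGraph.reachable_iff_reflTransGen]
    intro h
    induction h with
    | refl => exact hz
    | tail _ hadj ih => exact hclosed _ _ ih hadj
  · intro hw
    refine (hE.reachable z hz w hw).mono fun u v huv => ?_
    rw [SimpleGraph.fromEdgeSet_adj] at huv
    exact ⟨huv.2, hω.1 _ huv.1⟩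

lemma compSize_of_mem_openClosed (hE : IsSpanningTreeOn E S)
    (hω : ω ∈ openClosed E (incidentEdges S \ E)) (hz : z ∈ S) :
    compSize (graphOf ω) z = #S := by
  have : {w | (graphOf ω).Reachable z w} = (S : Set (Fin n)) :=
    Set.ext fun w => reachable_iff_mem_of_mem_openClosed hE hω hz
  rw [compSize, this, Nat.card_coe_set_eq, Set.ncard_coe_finset]

lemma disjoint_openClosed_of_ne (hE : IsSpanningTreeOn E S) (hE' : IsSpanningTreeOn E' S')
    (hz : z ∈ S) (hz' : z ∈ S') (hne : (S, E) ≠ (S', E')) :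
    Disjoint (openClosed E (incidentEdges S \ E)) (openClosed E' (incidentEdges S' \ E')) := by
  by_cases hS : S = S'
  · subst hS
    have hEE : E ≠ E' := fun h => hne (h ▸ rfl)
    obtain ⟨e, he⟩ := not_forall.1 (mt Finset.ext hEE)
    by_cases heE : e ∈ E
    · have heE' : e ∉ E' := fun h => he ⟨fun _ => h, fun _ => heE⟩
      exact disjoint_openClosed heE (mem_sdiff.2 ⟨hE.subset_incidentEdges heE, heE'⟩)
    · have heE' : e ∈ E' := by tauto
      exact (disjoint_openClosed heE' (mem_sdiff.2 ⟨hE'.subset_incidentEdges heE', heE⟩)).symm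
  · exact Set.disjoint_left.2 fun ω h h' => hS <| Finset.ext fun w =>
      (reachable_iff_mem_of_mem_openClosed hE h hz).symm.trans
        (reachable_iff_mem_of_mem_openClosed hE' h' hz')

end Components

lemma choose_mul_pow_mul_le_erMeasure_real {n : ℕ} (hn : 0 < n) (z : Fin n) {j : ℕ}
    (hj : 1 ≤ j) :
    (n - 1).choose (j - 1) * j ^ (j - 2) * (n : ℝ)⁻¹ ^ (j - 1) *
        (1 - (n : ℝ)⁻¹) ^ (j * (n - 1)) ≤
      (erMeasure n).real {ω | compSize (graphOf ω) z = j} := by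
  classical
  set 𝒮 := powersetCard (j - 1) (univ.erase z)
  have h𝒮 : ∀ S' ∈ 𝒮, z ∉ S' ∧ #(insert z S') = j := by
    intro S' hS'
    obtain ⟨hsub, hcard⟩ := mem_powersetCard.1 hS'
    have hz : z ∉ S' := fun h => (mem_erase.1 (hsub h)).1 rfl
    exact ⟨hz, by rw [card_insert_of_notMem hz, hcard]; omega⟩
  set ι := 𝒮.sigma fun S' => spanningTrees (insert z S')
  set ev : (Σ _ : Finset (Fin n), Finset (Sym2 (Fin n))) → Set (Sym2 (Fin n) → Bool) :=
    fun i => openClosed i.2 (incidentEdges (insert z i.1) \ i.2)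
  have hq : 0 ≤ 1 - (n : ℝ)⁻¹ := sub_nonneg.2 (Nat.cast_inv_le_one n)
  set q : ℝ := (n : ℝ)⁻¹ ^ (j - 1) * (1 - (n : ℝ)⁻¹) ^ (j * (n - 1))
  have hcard : (n - 1).choose (j - 1) * j ^ (j - 2) ≤ #ι := by
    rw [card_sigma]
    calc (n - 1).choose (j - 1) * j ^ (j - 2) = ∑ _S' ∈ 𝒮, j ^ (j - 2) := by
          simp [𝒮, card_powersetCard]
      _ ≤ _ := sum_le_sum fun S' hS' => (h𝒮 S' hS').2 ▸
          card_pow_le_card_spanningTrees (insert_nonempty z S')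
  have hterm : ∀ i ∈ ι, q ≤ (erMeasure n).real (ev i) := by
    intro i hi
    obtain ⟨hS', hE⟩ := mem_sigma.1 hi
    have hE := mem_spanningTrees.1 hE
    have hEcard : #i.2 = j - 1 := by have := hE.card_add_one; have := (h𝒮 _ hS').2; omega
    rw [erMeasure_real_openClosed hn disjoint_sdiff, hEcard]
    refine mul_le_mul_of_nonneg_left (pow_le_pow_of_le_one hq (by simp) ?_) (by positivity)
    calc #(incidentEdges (insert z i.1) \ i.2) ≤ #(incidentEdges (insert z i.1)) :=
          card_le_card sdiff_subset
      _ ≤ j * (n - 1) := by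
          simpa [(h𝒮 _ hS').2] using card_incidentEdges_le (S := insert z i.1)
  have hdisj : (ι : Set _).PairwiseDisjoint ev := by
    intro x hx y hy hxy
    obtain ⟨hxS, hxE⟩ := mem_sigma.1 hx
    obtain ⟨hyS, hyE⟩ := mem_sigma.1 hy
    refine disjoint_openClosed_of_ne (mem_spanningTrees.1 hxE) (mem_spanningTrees.1 hyE)
      (mem_insert_self z _) (mem_insert_self z _) fun h => hxy ?_
    obtain ⟨hS, hE⟩ := Prod.mk.inj h
    have : x.1 = y.1 := by
      rw [← erase_insert (h𝒮 _ hxS).1, hS, erase_insert (h𝒮 _ hyS).1]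
    exact Sigma.ext this (heq_of_eq hE)
  have hsub : (⋃ i ∈ ι, ev i) ⊆ {ω | compSize (graphOf ω) z = j} := by
    simp only [Set.iUnion_subset_iff]
    intro i hi ω hω
    obtain ⟨hS', hE⟩ := mem_sigma.1 hi
    rw [Set.mem_ofPred_eq, compSize_of_mem_openClosed (mem_spanningTrees.1 hE) hω
      (mem_insert_self z _), (h𝒮 _ hS').2]
  calc (n - 1).choose (j - 1) * j ^ (j - 2) * (n : ℝ)⁻¹ ^ (j - 1) *
          (1 - (n : ℝ)⁻¹) ^ (j * (n - 1))
      = (((n - 1).choose (j - 1) * j ^ (j - 2) : ℕ) : ℝ) * q := by push_cast; ring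
    _ ≤ ∑ _i ∈ ι, q := by
        rw [sum_const, nsmul_eq_mul]
        exact mul_le_mul_of_nonneg_right (by exact_mod_cast hcard)
          (mul_nonneg (by positivity) (pow_nonneg hq _))
    _ ≤ ∑ i ∈ ι, (erMeasure n).real (ev i) := sum_le_sum hterm
    _ = (erMeasure n).real (⋃ i ∈ ι, ev i) :=
        (measureReal_biUnion_finset hdisj fun i _ => (Set.toFinite _).measurableSet).symm
    _ ≤ _ := measureReal_mono hsub

lemma exp_neg_one_le_one_sub_inv_pow (n : ℕ) : exp (-1) ≤ (1 - (n : ℝ)⁻¹) ^ (n - 1) := by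
  rcases n with _ | m
  · simp [exp_le_one_iff]
  rcases m.eq_zero_or_pos with rfl | hm
  · simp [exp_le_one_iff]
  have hbase : (1 - ((m + 1 : ℕ) : ℝ)⁻¹) * (1 + (m : ℝ)⁻¹) = 1 := by
    have : (m : ℝ) ≠ 0 := by positivity
    field_simp
    push_cast
    ring
  have hnonneg : 0 ≤ 1 - ((m + 1 : ℕ) : ℝ)⁻¹ := sub_nonneg.2 (Nat.cast_inv_le_one _)
  calc exp (-1) = (1 - ((m + 1 : ℕ) : ℝ)⁻¹) ^ m * (1 + (m : ℝ)⁻¹) ^ m / exp 1 := by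
        rw [← mul_pow, hbase, one_pow, exp_neg, one_div]
    _ ≤ (1 - ((m + 1 : ℕ) : ℝ)⁻¹) ^ m * exp 1 / exp 1 := by
        gcongr
        exact one_add_inv_pow_le_exp
    _ = _ := by rw [mul_div_cancel_right₀ _ (exp_pos 1).ne', Nat.add_sub_cancel]

lemma exp_mul_factorial_le (m : ℕ) :
    exp m * m ! ≤ ((m : ℝ) + 1) ^ m * √((m : ℝ) + 1) := by
  have hseq : Stirling.stirlingSeq (m + 1) ≤ exp 1 / √2 :=
    Stirling.stirlingSeq_one ▸ Stirling.stirlingSeq'_antitone (Nat.zero_le m)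
  rw [Stirling.stirlingSeq, div_le_iff₀ (by positivity)] at hseq
  have hm : (0 : ℝ) < m + 1 := by positivity
  have h2 : √(2 * ((m : ℝ) + 1)) = √2 * √((m : ℝ) + 1) := sqrt_mul (by norm_num) _
  have he : exp 1 ^ (m + 1) = exp 1 * exp m := by
    rw [← exp_nat_mul, ← exp_add]; push_cast; ring_nf
  push_cast at hseq
  rw [h2, div_pow, he, Nat.factorial_succ] at hseq
  push_cast at hseq
  refine le_of_mul_le_mul_left ?_ hm
  calc (m + 1) * (exp m * m !) = exp m * ((m + 1) * m !) := by ring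
    _ ≤ exp m * (exp 1 / √2 *
          (√2 * √((m : ℝ) + 1) * ((m + 1) ^ (m + 1) / (exp 1 * exp m)))) := by
        gcongr
    _ = (m + 1) * (((m : ℝ) + 1) ^ m * √((m : ℝ) + 1)) := by
        field_simp
        ring

lemma pow_le_two_mul_factorial_mul_choose {n k : ℕ} (h : 2 * k ^ 2 ≤ n) :
    (n : ℝ) ^ k ≤ 2 * (k ! * (n - 1).choose k) := by
  rcases k.eq_zero_or_pos with rfl | hk
  · norm_num
  have hkn : k ≤ n := by nlinarith
  have hn : (0 : ℝ) < n := by norm_cast; omega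
  have hdesc : ((n - k : ℕ) : ℝ) ^ k ≤ k ! * (n - 1).choose k := by
    have := Nat.pow_sub_le_descFactorial (n - 1) k
    rw [Nat.descFactorial_eq_factorial_mul_choose, show n - 1 + 1 - k = n - k by omega] at this
    exact_mod_cast this
  have hsq : (k : ℝ) * (k / n) ≤ 1 / 2 := by
    rw [← mul_div_assoc, div_le_iff₀ hn]
    have : ((2 * k ^ 2 : ℕ) : ℝ) ≤ n := by exact_mod_cast h
    push_cast at this
    linarith
  have hbern : (1 : ℝ) / 2 ≤ (1 - k / n) ^ k := by
    have hkn' : (k : ℝ) / n ≤ 1 := by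
      rw [div_le_one hn]; exact_mod_cast hkn
    have := one_add_mul_le_pow (a := -((k : ℝ) / n)) (by linarith) k
    rw [← sub_eq_add_neg] at this
    linarith
  calc (n : ℝ) ^ k = 2 * (n ^ k * (1 / 2)) := by ring
    _ ≤ 2 * (n ^ k * (1 - k / n) ^ k) := by gcongr
    _ = 2 * ((n - k : ℕ) : ℝ) ^ k := by
        rw [← mul_pow, Nat.cast_sub hkn, mul_sub, mul_one, mul_div_cancel₀ _ hn.ne']
    _ ≤ 2 * (k ! * (n - 1).choose k) := by gcongr

lemma rpow_neg_three_halves {x : ℝ} (hx : 0 < x) : x ^ (-(3 : ℝ) / 2) = 1 / (x * √x) := by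
  rw [show -(3 : ℝ) / 2 = -(1 + 1 / 2) by norm_num, rpow_neg hx.le, rpow_add hx, rpow_one,
    ← sqrt_eq_rpow, one_div]

lemma exp_neg_one_div_two_mul_rpow_le {n j : ℕ} (hj : 1 ≤ j) (hn : 2 * (j - 1) ^ 2 ≤ n) :
    exp (-1) / 2 * (j : ℝ) ^ (-(3 : ℝ) / 2) ≤
      (n - 1).choose (j - 1) * j ^ (j - 2) * (n : ℝ)⁻¹ ^ (j - 1) *
        (1 - (n : ℝ)⁻¹) ^ (j * (n - 1)) := by
  obtain ⟨k, rfl⟩ := Nat.exists_eq_add_of_le' hj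
  simp only [Nat.add_sub_cancel] at hn ⊢
  set J : ℝ := ((k + 1 : ℕ) : ℝ) ^ (k + 1 - 2)
  have hJ : ((k + 1 : ℕ) : ℝ) ^ k = J * (k + 1) := by
    rcases k with _ | k
    · simp [J]
    · simp only [J, show k + 1 + 1 - 2 = k by omega]; push_cast; ring
  have hscale : 1 ≤ 2 * k ! * ((n - 1).choose k * (n : ℝ)⁻¹ ^ k) := by
    rcases k.eq_zero_or_pos with rfl | hk
    · norm_num
    have hn0 : (n : ℝ) ≠ 0 := by norm_cast; nlinarith
    have := mul_le_mul_of_nonneg_right (pow_le_two_mul_factorial_mul_choose hn)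
      (pow_nonneg (inv_nonneg.2 (Nat.cast_nonneg n)) k)
    rw [← mul_pow, mul_inv_cancel₀ hn0, one_pow] at this
    linarith
  have hfact : exp k / (((k + 1 : ℕ) : ℝ) ^ k * √((k + 1 : ℕ) : ℝ)) ≤ 1 / k ! := by
    rw [div_le_div_iff₀ (by positivity) (by positivity), one_mul]
    push_cast
    exact exp_mul_factorial_le k
  have hQ : exp (-1) ^ (k + 1) ≤ (1 - (n : ℝ)⁻¹) ^ ((k + 1) * (n - 1)) := by
    rw [mul_comm, pow_mul]
    gcongr
    exact exp_neg_one_le_one_sub_inv_pow n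
  have he : exp k * exp (-1) ^ k = 1 := by
    rw [← exp_nat_mul, ← exp_add]; simp
  have hk1 : (0 : ℝ) < ((k + 1 : ℕ) : ℝ) := by positivity
  have hq : 0 ≤ 1 - (n : ℝ)⁻¹ := sub_nonneg.2 (Nat.cast_inv_le_one n)
  rw [rpow_neg_three_halves hk1]
  calc exp (-1) / 2 * (1 / (((k + 1 : ℕ) : ℝ) * √((k + 1 : ℕ) : ℝ)))
      = exp k / (((k + 1 : ℕ) : ℝ) ^ k * √((k + 1 : ℕ) : ℝ)) / 2 * J *
          exp (-1) ^ (k + 1) := by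
        have hJ0 : J ≠ 0 := by positivity
        rw [hJ, pow_succ]
        push_cast
        field_simp
        exact he.symm
    _ ≤ 1 / k ! / 2 * J * (1 - (n : ℝ)⁻¹) ^ ((k + 1) * (n - 1)) := by gcongr
    _ ≤ (2 * k ! * ((n - 1).choose k * (n : ℝ)⁻¹ ^ k)) / k ! / 2 * J *
          (1 - (n : ℝ)⁻¹) ^ ((k + 1) * (n - 1)) := by gcongr
    _ = _ := by field_simp

lemma pow_five_le_of_le_rpow {j n : ℕ} (h : (j : ℝ) ≤ (n : ℝ) ^ ((1 : ℝ) / 5)) :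
    j ^ 5 ≤ n := by
  have h5 : ((n : ℝ) ^ ((1 : ℝ) / 5)) ^ 5 = n := by
    rw [← rpow_natCast, ← rpow_mul (Nat.cast_nonneg n)]
    norm_num
  exact_mod_cast (pow_le_pow_left₀ (Nat.cast_nonneg j) h 5).trans_eq h5

/-- There is a constant `c > 0` such that for every `n` and every
integer `j` with `1 ≤ j ≤ n^{1/5}`, the component of the first vertex in `G(n, 1/n)`
satisfies `P( |C(1)| = j ) ≥ c j^{−3/2}`. (The constraints force `n ≥ 1`, so the
hypothesis `0 < n` making the vertex well defined is no extra restriction.) -/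
theorem component_size_lower_bound :
    ∃ c > (0 : ℝ), ∀ n : ℕ, ∀ hn : 0 < n, ∀ j : ℕ, 1 ≤ j → (j : ℝ) ≤ (n : ℝ) ^ ((1 : ℝ) / 5) →
      c * (j : ℝ) ^ (-(3 : ℝ) / 2) ≤
        (erMeasure n {ω | compSize (graphOf ω) ⟨0, hn⟩ = j}).toReal := by
  refine ⟨exp (-1) / 2, by positivity, fun n hn j hj hjn => ?_⟩
  have hn2 : 2 * (j - 1) ^ 2 ≤ n := by
    obtain ⟨k, rfl⟩ := Nat.exists_eq_add_of_le' hj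
    have hk : 2 * k ^ 2 ≤ (k + 1) ^ 5 := by ring_nf; omega
    rw [Nat.add_sub_cancel]
    exact hk.trans (pow_five_le_of_le_rpow hjn)
  exact (exp_neg_one_div_two_mul_rpow_le hj hn2).trans
    (choose_mul_pow_mul_le_erMeasure_real hn ⟨0, hn⟩ hj)
end

section
/- Let γ ∈ ℝ and let w be any assignment of weights to the edges of K_n taking values in {1, n^{1+γ}}. For a vertex u, let C(u) be the set of vertices reachable from u using only edges e with w(e) = n^{1+γ}. Let T be sampled from the weighted uniform spanning tree measure P^w, and for vertices u, v let π_T(u,v) be the path in T connecting u and v. Then P^w( there exist vertices u, v of K_n and an edge e with v ∈ C(u), e ∈ π_T(u,v), and w(e) = 1 ) ≤ n^{4−γ}. -/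
open MeasureTheory Filter
open scoped ENNReal

/-- The graph of heavy edges: `u ∼ v` iff the edge `{u,v}` has weight `n^(1+γ)`.
Its components are the sets `C(u)` of vertices reachable by heavy edges. -/
def heavyGraph (n : ℕ) (γ : ℝ) (w : Sym2 (Fin n) → ℝ) : SimpleGraph (Fin n) where
  Adj u v := u ≠ v ∧ w s(u, v) = (n : ℝ) ^ ((1 : ℝ) + γ)
  symm := by
    constructor
    intro u v h
    exact ⟨Ne.symm h.1, by rw [Sym2.eq_swap]; exact h.2⟩
  loopless := by
    constructor
    intro u h
    exact h.1 rfl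


/-! If a light tree edge `e` separates two vertices of one heavy component, some heavy edge `f`
crosses the cut of `T - e`, and `T - e + f` is again a spanning tree, of weight `n^(1+γ)` times
that of `T`. Since `T` is recovered from `T - e + f` and the endpoints of `e` and `f`, each tree
arises from at most `n^4` bad trees, so the bad trees carry at most `n^4 / n^(1+γ) ≤ n^(4-γ)` of
the total weight. -/

namespace SimpleGraph

variable {V : Type*} {G H T : SimpleGraph V} {u v a b : V} {e : Sym2 V}

theorem Reachable.exists_adj_not_reachable (huv : H.Reachable u v) (hG : ¬G.Reachable u v) :
    ∃ a b, H.Adj a b ∧ ¬G.Reachable a b := by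
  contrapose! hG
  rw [reachable_iff_reflTransGen] at huv ⊢
  exact Relation.ReflTransGen.lift' id
    (fun a b hab => (reachable_iff_reflTransGen a b).1 (hG a b hab)) u v huv

theorem Connected.reachable_deleteEdges_or (hG : G.Connected) (c d x : V) :
    (G.deleteEdges {s(c, d)}).Reachable x c ∨ (G.deleteEdges {s(c, d)}).Reachable x d := by
  have hxc := (reachable_iff_reflTransGen x c).1 (hG.preconnected x c)
  induction hxc using Relation.ReflTransGen.head_induction_on with
  | refl => exact .inl .rfl
  | @head y z hyz _ ih =>
    by_cases hcd : s(y, z) = s(c, d)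
    · rcases Sym2.eq_iff.1 hcd with ⟨rfl, -⟩ | ⟨rfl, -⟩
      · exact .inl .rfl
      · exact .inr .rfl
    · have hyz' : (G.deleteEdges {s(c, d)}).Adj y z := deleteEdges_adj.2 ⟨hyz, hcd⟩
      exact ih.imp hyz'.reachable.trans hyz'.reachable.trans

theorem IsTree.deleteEdges_sup_edge (hT : T.IsTree) (hab : ¬(T.deleteEdges {e}).Reachable a b) :
    (T.deleteEdges {e} ⊔ edge a b).IsTree := by
  induction e with | h c d =>
  set D := T.deleteEdges {s(c, d)}
  have hD : D ≤ D ⊔ edge a b := le_sup_left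
  have hab' : (D ⊔ edge a b).Reachable a b :=
    Adj.reachable (Or.inr ((edge_adj a b a b).2 ⟨.inl ⟨rfl, rfl⟩, fun h => hab (h ▸ .rfl)⟩))
  have hside := hT.connected.reachable_deleteEdges_or c d
  -- `a` and `b` lie on opposite sides of the deleted edge, so the new edge reconnects them
  have hcd : (D ⊔ edge a b).Reachable c d := by
    rcases hside a with ha | ha <;> rcases hside b with hb | hb
    · exact absurd (ha.trans hb.symm) hab
    · exact (ha.mono hD).symm.trans (hab'.trans (hb.mono hD))
    · exact (hb.mono hD).symm.trans (hab'.symm.trans (ha.mono hD))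
    · exact absurd (ha.trans hb.symm) hab
  have hreach (x : V) : (D ⊔ edge a b).Reachable x c :=
    (hside x).elim (·.mono hD) fun hx => (hx.mono hD).trans hcd.symm
  have : Nonempty V := ⟨c⟩
  exact ⟨⟨fun x y => (hreach x).trans (hreach y).symm⟩,
    (hT.isAcyclic.anti (deleteEdges_le _)).sup_edge_of_not_reachable hab⟩

theorem IsTree.exists_adj_deleteEdges_sup_edge (hT : T.IsTree) (he : e ∉ H.edgeSet)
    (huv : H.Reachable u v) (hnr : ¬(T.deleteEdges {e}).Reachable u v) :
    ∃ a b, H.Adj a b ∧ ¬T.Adj a b ∧ (T.deleteEdges {e} ⊔ edge a b).IsTree := by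
  obtain ⟨a, b, hHab, hab⟩ := huv.exists_adj_not_reachable hnr
  refine ⟨a, b, hHab, fun hTab => hab (Adj.reachable (deleteEdges_adj.2 ⟨hTab, ?_⟩)),
    hT.deleteEdges_sup_edge hab⟩
  rintro rfl
  exact he hHab

theorem edgeSet_deleteEdges_sup_edge (hab : a ≠ b) :
    (T.deleteEdges {e} ⊔ edge a b).edgeSet = insert s(a, b) (T.edgeSet \ {e}) := by
  rw [edgeSet_sup, edgeSet_deleteEdges, edgeSet_edge_of_ne hab, Set.union_singleton]

theorem deleteEdges_sup_edge_deleteEdges_sup (he : e ∈ T.edgeSet) (hab : ¬T.Adj a b) :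
    (T.deleteEdges {e} ⊔ edge a b).deleteEdges {s(a, b)} ⊔ fromEdgeSet {e} = T := by
  induction e with | h c d =>
  rw [mem_edgeSet] at he
  ext x y
  simp only [sup_adj, deleteEdges_adj, edge_adj, fromEdgeSet_adj, Set.mem_singleton_iff,
    Sym2.eq_iff]
  grind [T.ne_of_adj, T.adj_symm]

end SimpleGraph

theorem Finset.sum_comp_le_card_nsmul_sum {ι κ β M : Type*} [AddCommMonoid M] [PartialOrder M]
    [IsOrderedAddMonoid M] [DecidableEq κ] [DecidableEq β] [Fintype β] {s : Finset ι}
    {t : Finset κ} {f : κ → M} (Φ : ι → κ) (g : ι → β) (hΦ : ∀ i ∈ s, Φ i ∈ t)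
    (hinj : Set.InjOn (fun i => (Φ i, g i)) s) (hf : ∀ k ∈ t, 0 ≤ f k) :
    ∑ i ∈ s, f (Φ i) ≤ Fintype.card β • ∑ k ∈ t, f k :=
  calc ∑ i ∈ s, f (Φ i) = ∑ x ∈ s.image fun i => (Φ i, g i), f x.1 := (sum_image (f := fun x => f x.1) hinj).symm
    _ ≤ ∑ x ∈ t ×ˢ univ, f x.1 :=
      sum_le_sum_of_subset_of_nonneg
        (image_subset_iff.2 fun i hi => mem_product.2 ⟨hΦ i hi, mem_univ _⟩)
        fun x hx _ => hf _ (mem_product.1 hx).1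
    _ = Fintype.card β • ∑ k ∈ t, f k := by
      rw [sum_product, smul_sum]
      simp

open SimpleGraph

section TreeWeight

variable {n : ℕ} {w : Sym2 (Fin n) → ℝ}

theorem treeWeight_eq_finprod (w : Sym2 (Fin n) → ℝ) (T : SimpleGraph (Fin n)) :
    treeWeight w T = ∏ᶠ e ∈ T.edgeSet, w e :=
  letI : Fintype T.edgeSet := Fintype.ofFinite _
  (finprod_mem_eq_toFinset_prod _ _).symm

theorem treeWeight_nonneg (hw : ∀ e, 0 ≤ w e) (T : SimpleGraph (Fin n)) : 0 ≤ treeWeight w T :=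
  letI : Fintype T.edgeSet := Fintype.ofFinite _
  Finset.prod_nonneg fun e _ => hw e

theorem treeWeight_deleteEdges_sup_edge {T : SimpleGraph (Fin n)} {e : Sym2 (Fin n)}
    {a b : Fin n} (he : e ∈ T.edgeSet) (hab : a ≠ b) (hT : ¬T.Adj a b) :
    w e * treeWeight w (T.deleteEdges {e} ⊔ edge a b) = w s(a, b) * treeWeight w T := by
  rw [treeWeight_eq_finprod, treeWeight_eq_finprod, edgeSet_deleteEdges_sup_edge hab,
    finprod_mem_insert _ (fun h => hT h.1) T.edgeSet.toFinite.sdiff, mul_left_comm,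
    ← finprod_mem_insert w (s := T.edgeSet \ {e}) (fun h => h.2 rfl) T.edgeSet.toFinite.sdiff,
    Set.insert_sdiff_singleton, Set.insert_eq_of_mem he]

end TreeWeight

def LightEdgeSplitsHeavyComponent (n : ℕ) (γ : ℝ) (w : Sym2 (Fin n) → ℝ)
    (T : SimpleGraph (Fin n)) : Prop :=
  ∃ u v : Fin n, ∃ e ∈ T.edgeSet, (heavyGraph n γ w).Reachable u v ∧
    ¬(T.deleteEdges {e}).Reachable u v ∧ w e = 1

section Exchange

variable {n : ℕ} {γ : ℝ} {w : Sym2 (Fin n) → ℝ}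

theorem LightEdgeSplitsHeavyComponent.exists_exchange {T : SimpleGraph (Fin n)}
    (h : LightEdgeSplitsHeavyComponent n γ w T) (hT : T.IsTree) (h1 : (n : ℝ) ^ (1 + γ) ≠ 1) :
    ∃ c d a b : Fin n, T.Adj c d ∧ w s(c, d) = 1 ∧ (heavyGraph n γ w).Adj a b ∧ ¬T.Adj a b ∧
      (T.deleteEdges {s(c, d)} ⊔ edge a b).IsTree := by
  obtain ⟨u, v, e, he, huv, hnr, hwe⟩ := h
  induction e with | h c d =>
  obtain ⟨a, b, hab, hTab, htree⟩ := hT.exists_adj_deleteEdges_sup_edge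
    (fun hH => h1 (hwe ▸ ((heavyGraph n γ w).mem_edgeSet.1 hH).2).symm) huv hnr
  exact ⟨c, d, a, b, he, hwe, hab, hTab, htree⟩

theorem rpow_mul_sum_treeWeight_le [Nonempty (Fin n)] (hw : ∀ e, 0 ≤ w e) (h1 : (n : ℝ) ^ (1 + γ) ≠ 1)
    {s t : Finset (SimpleGraph (Fin n))}
    (hs : ∀ T ∈ s, T.IsTree ∧ LightEdgeSplitsHeavyComponent n γ w T)
    (ht : ∀ T, T.IsTree → T ∈ t) :
    (n : ℝ) ^ (1 + γ) * ∑ T ∈ s, treeWeight w T ≤ n ^ 4 * ∑ T ∈ t, treeWeight w T := by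
  classical
  have hexchange (T) (hT : T ∈ s) := (hs T hT).2.exists_exchange (hs T hT).1 h1
  choose! c d a b hcd hwcd hab hTab htree using hexchange
  set Φ := fun T => T.deleteEdges {s(c T, d T)} ⊔ edge (a T) (b T)
  have hweight (T) (hT : T ∈ s) : (n : ℝ) ^ (1 + γ) * treeWeight w T = treeWeight w (Φ T) := by
    rw [← (hab T hT).2, ← treeWeight_deleteEdges_sup_edge (T.mem_edgeSet.2 (hcd T hT)) (hab T hT).1 (hTab T hT),
      hwcd T hT, one_mul]
  -- a tree is recovered from its exchange and the two exchanged edges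
  have hinj : Set.InjOn (fun T => (Φ T, ((c T, d T), (a T, b T)))) s := by
    intro T₁ h₁ T₂ h₂ h
    simp only [Prod.mk.injEq] at h
    obtain ⟨hΦ, ⟨hc, hd⟩, ha, hb⟩ := h
    calc T₁ = (Φ T₁).deleteEdges {s(a T₁, b T₁)} ⊔ fromEdgeSet {s(c T₁, d T₁)} :=
          (deleteEdges_sup_edge_deleteEdges_sup (T₁.mem_edgeSet.2 (hcd T₁ h₁)) (hTab T₁ h₁)).symm
      _ = (Φ T₂).deleteEdges {s(a T₂, b T₂)} ⊔ fromEdgeSet {s(c T₂, d T₂)} := by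
          rw [hΦ, ha, hb, hc, hd]
      _ = T₂ := deleteEdges_sup_edge_deleteEdges_sup (T₂.mem_edgeSet.2 (hcd T₂ h₂)) (hTab T₂ h₂)
  calc (n : ℝ) ^ (1 + γ) * ∑ T ∈ s, treeWeight w T = ∑ T ∈ s, treeWeight w (Φ T) := by
        rw [Finset.mul_sum]
        exact Finset.sum_congr rfl hweight
    _ ≤ Fintype.card ((Fin n × Fin n) × (Fin n × Fin n)) • ∑ T ∈ t, treeWeight w T :=
        Finset.sum_comp_le_card_nsmul_sum Φ _ (fun T hT => ht _ (htree T hT)) hinj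
          fun T _ => treeWeight_nonneg hw T
    _ = n ^ 4 * ∑ T ∈ t, treeWeight w T := by
        simp only [Fintype.card_prod, Fintype.card_fin, nsmul_eq_mul]
        push_cast
        ring

theorem sum_treeWeight_le_rpow_mul (hw : ∀ e, 0 ≤ w e) {s t : Finset (SimpleGraph (Fin n))}
    (hs : ∀ T ∈ s, T.IsTree ∧ LightEdgeSplitsHeavyComponent n γ w T)
    (ht : ∀ T, T.IsTree → T ∈ t) :
    ∑ T ∈ s, treeWeight w T ≤ (n : ℝ) ^ (4 - γ) * ∑ T ∈ t, treeWeight w T := by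
  have ht0 : 0 ≤ ∑ T ∈ t, treeWeight w T := Finset.sum_nonneg fun T _ => treeWeight_nonneg hw T
  rcases s.eq_empty_or_nonempty with rfl | ⟨T₀, hT₀⟩
  · rw [Finset.sum_empty]
    exact mul_nonneg (Real.rpow_nonneg n.cast_nonneg _) ht0
  have : Nonempty (Fin n) := (hs T₀ hT₀).1.connected.nonempty
  have hn : 1 ≤ (n : ℝ) := Nat.one_le_cast.2 (Fin.pos_iff_nonempty.2 ‹_›)
  have hheavy : 0 < (n : ℝ) ^ (1 + γ) := Real.rpow_pos_of_pos (by linarith) _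
  have hexp : (n : ℝ) ^ (4 - γ) = n ^ 5 / n ^ (1 + γ) := by
    rw [← Real.rpow_natCast, ← Real.rpow_sub (by linarith)]
    norm_num
    ring_nf
  rw [hexp, div_mul_eq_mul_div, le_div_iff₀ hheavy, mul_comm]
  by_cases h1 : (n : ℝ) ^ (1 + γ) = 1
  · rw [h1, one_mul]
    calc ∑ T ∈ s, treeWeight w T ≤ ∑ T ∈ t, treeWeight w T :=
          Finset.sum_le_sum_of_subset_of_nonneg (fun T hT => ht _ (hs T hT).1)
            fun T _ _ => treeWeight_nonneg hw T
      _ ≤ n ^ 5 * ∑ T ∈ t, treeWeight w T := le_mul_of_one_le_left ht0 (one_le_pow₀ hn)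
  · calc (n : ℝ) ^ (1 + γ) * ∑ T ∈ s, treeWeight w T ≤ n ^ 4 * ∑ T ∈ t, treeWeight w T :=
          rpow_mul_sum_treeWeight_le hw h1 hs ht
      _ ≤ n ^ 5 * ∑ T ∈ t, treeWeight w T :=
          mul_le_mul_of_nonneg_right (pow_le_pow_right₀ hn (by norm_num)) ht0

end Exchange

/-- Let `γ ∈ ℝ` and let `w` be any assignment of weights in
`{1, n^{1+γ}}` to the edges of `K_n`. If `T` is sampled from the weighted uniform
spanning tree measure `P^w`, then the probability that there are vertices `u, v` with
`v ∈ C(u)` and an edge `e` of weight `1` on the tree path `π_T(u,v)` is at most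
`n^{4−γ}`.  (For a tree `T`, an edge `e ∈ T` lies on the path between `u` and `v`
if and only if deleting `e` disconnects `u` from `v` in `T`.) -/
theorem path_inside_component (n : ℕ) (γ : ℝ) (w : Sym2 (Fin n) → ℝ)
    (hw : ∀ e, w e = 1 ∨ w e = (n : ℝ) ^ ((1 : ℝ) + γ)) :
    ustProb w {T : SimpleGraph (Fin n) | ∃ u v : Fin n, ∃ e ∈ T.edgeSet,
        (heavyGraph n γ w).Reachable u v ∧
        ¬ (T.deleteEdges {e}).Reachable u v ∧ w e = 1} ≤ (n : ℝ) ^ ((4 : ℝ) - γ) := by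
  have hw0 (e) : 0 ≤ w e := by
    rcases hw e with h | h <;> rw [h]
    exacts [zero_le_one, Real.rpow_nonneg n.cast_nonneg _]
  unfold ustProb
  exact div_le_of_le_mul₀ (Finset.sum_nonneg fun T _ => treeWeight_nonneg hw0 T)
    (Real.rpow_nonneg n.cast_nonneg _)
    (sum_treeWeight_le_rpow_mul hw0 (fun T hT => by simpa [LightEdgeSplitsHeavyComponent] using hT)
      fun T hT => by simpa using hT)
end
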